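/- arXiv:2005.05364 — 4 statements merged into one kernel-verified Lean document; each statement's English description precedes it below -/
import Mathlib

section
/- Under Assumption 1, a liquidation vector s** ∈ D is a Nash equilibrium of problem (P2) at the consistent prices (q**, q̄**) = (g(Σ_{i=1}^n s_i**), f̄_1(s**), ..., f̄_n(s**)) if and only if s** is a Nash equilibrium of problem (P1). -/
/-! At the consistent prices, bank `i`'s (P2) constraints are the linearisations at `sᵢ` of its
(P1) constraints, so `sᵢ` is feasible for one problem iff it is for the other. When it is,
monotonicity of `f̄ᵢ` and `g` puts the (P2) feasible interval inside the (P1) one, so a (P1)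
optimum is a (P2) optimum. Conversely, the objective is convex in `sᵢ`, and a (P2) optimum
cannot sit at an end of the (P2) interval beyond which (P1) is still feasible, so by convexity it
stays optimal for (P1). An infeasible `sᵢ` forces `sᵢ = aᵢ`, and there both insolvency conditions
read `aᵢ f̄ᵢ(s) < hᵢ`, the (P1) one by the intermediate value theorem for the cash raised. -/

noncomputable section

/-- The domain `D = ∏ [0, aᵢ]` of admissible liquidation vectors. -/
def memD (n : ℕ) (a s : Fin n → ℝ) : Prop := ∀ i, s i ∈ Set.Icc 0 (a i)

/-- Bank `i`'s cost: realized loss from sales plus interest on the borrowed amount. -/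
def obj (n : ℕ) (r : ℝ) (h : Fin n → ℝ) (fbar : Fin n → (Fin n → ℝ) → ℝ)
    (i : Fin n) (s : Fin n → ℝ) : ℝ :=
  s i * (1 - fbar i s) + r * (h i - s i * fbar i s)

/-- Feasibility in problem (P2) with fixed prices `(q, q̄)`. -/
def feasP2 (n : ℕ) (a h : Fin n → ℝ) (q : ℝ) (qb : Fin n → ℝ) (i : Fin n) (x : ℝ) : Prop :=
  x ∈ Set.Icc 0 (a i) ∧ x ≤ h i / qb i ∧ (h i - a i * q) / (qb i - q) ≤ x

/-- `s` is a Nash equilibrium of problem (P2) at fixed prices `(q, q̄)`: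
each bank's action is feasible and optimal given the others' actions, and a bank whose
feasible set is empty (`h i > a i * q̄ i`) liquidates everything. -/
def NashP2 (n : ℕ) (a h : Fin n → ℝ) (r q : ℝ) (qb : Fin n → ℝ)
    (fbar : Fin n → (Fin n → ℝ) → ℝ) (s : Fin n → ℝ) : Prop :=
  ∀ i : Fin n,
    (h i ≤ a i * qb i →
      feasP2 n a h q qb i (s i) ∧
      ∀ x : ℝ, feasP2 n a h q qb i x →
        obj n r h fbar i s ≤ obj n r h fbar i (Function.update s i x)) ∧
    (a i * qb i < h i → s i = a i)

/-- Feasibility in problem (P1): the sale raises at most `h i`, and cash raised plus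
collateral capacity covers the shortfall. -/
def feasP1 (n : ℕ) (a h : Fin n → ℝ) (fbar : Fin n → (Fin n → ℝ) → ℝ) (g : ℝ → ℝ)
    (i : Fin n) (s : Fin n → ℝ) (x : ℝ) : Prop :=
  x ∈ Set.Icc 0 (a i) ∧
  x * fbar i (Function.update s i x) ≤ h i ∧
  h i ≤ x * fbar i (Function.update s i x)
        + (a i - x) * g (∑ j, Function.update s i x j)

/-- `s` is a Nash equilibrium of problem (P1): each bank's action is feasible and optimal
given the others' actions, and a bank with empty feasible set liquidates everything. -/
def NashP1 (n : ℕ) (a h : Fin n → ℝ) (r : ℝ) (fbar : Fin n → (Fin n → ℝ) → ℝ)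
    (g : ℝ → ℝ) (s : Fin n → ℝ) : Prop :=
  ∀ i : Fin n,
    ((∃ x, feasP1 n a h fbar g i s x) →
      feasP1 n a h fbar g i s (s i) ∧
      ∀ x, feasP1 n a h fbar g i s x →
        obj n r h fbar i s ≤ obj n r h fbar i (Function.update s i x)) ∧
    ((¬ ∃ x, feasP1 n a h fbar g i s x) → s i = a i)

/-- Assumption 1 on the inverse demand functions `f̄ᵢ` and the haircut function `g`. -/
structure Assumption1 (n : ℕ) (a : Fin n → ℝ) (M : ℝ)
    (fbar : Fin n → (Fin n → ℝ) → ℝ) (g : ℝ → ℝ) : Prop where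
  fbar_mem : ∀ i s, memD n a s → fbar i s ∈ Set.Ioc (0 : ℝ) 1
  fbar_cont : ∀ i, ContinuousOn (fbar i) {s | memD n a s}
  fbar_anti : ∀ i s t, memD n a s → memD n a t → (∀ j, s j ≤ t j) → fbar i t ≤ fbar i s
  fbar_one : ∀ i, fbar i (fun _ => 0) = 1
  cash_mono : ∀ i s, memD n a s →
    StrictMonoOn (fun x => x * fbar i (Function.update s i x)) (Set.Icc 0 (a i))
  cash_concave : ∀ i s, memD n a s →
    ConcaveOn ℝ (Set.Icc 0 (a i)) (fun x => x * fbar i (Function.update s i x))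
  g_mem : ∀ x ∈ Set.Icc (0 : ℝ) M, g x ∈ Set.Ioc (0 : ℝ) 1
  g_cont : ContinuousOn g (Set.Icc 0 M)
  g_convex : ConvexOn ℝ (Set.Icc 0 M) g
  g_anti : StrictAntiOn g (Set.Icc 0 M)
  g_lt_fbar : ∀ i s, memD n a s → g (∑ j, s j) < fbar i s
  total_mono : ∀ i s, memD n a s →
    StrictMonoOn
      (fun x => x * fbar i (Function.update s i x)
        + (a i - x) * g (∑ j, Function.update s i x j)) (Set.Icc 0 (a i))

open Set Function

theorem ConvexOn.le_of_isMinOn_inter_Icc {φ : ℝ → ℝ} {I : Set ℝ} (hφ : ConvexOn ℝ I φ)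
    {lo hi s x : ℝ} (hs : s ∈ I ∩ Icc lo hi) (hmin : IsMinOn φ (I ∩ Icc lo hi) s) (hx : x ∈ I)
    (hlo : x < lo → lo < s) (hhi : hi < x → s < hi) : φ s ≤ φ x := by
  obtain ⟨hsI, hlos, hshi⟩ := hs
  rw [isMinOn_iff] at hmin
  rcases lt_or_ge x lo with hxlo | hlox
  · have hlos' := hlo hxlo
    have hloI : lo ∈ I := hφ.1.ordConnected.out hx hsI ⟨hxlo.le, hlos⟩
    have hmin_lo : φ s ≤ φ lo := hmin lo ⟨hloI, le_rfl, hlos.trans hshi⟩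
    exact hmin_lo.trans (hφ.le_left_of_right_le'' hx hsI hxlo.le hlos' hmin_lo)
  rcases le_or_gt x hi with hxhi | hhix
  · exact hmin x ⟨hx, hlox, hxhi⟩
  · have hshi' := hhi hhix
    have hhiI : hi ∈ I := hφ.1.ordConnected.out hsI hx ⟨hshi, hhix.le⟩
    have hmin_hi : φ s ≤ φ hi := hmin hi ⟨hhiI, hlos.trans hshi, le_rfl⟩
    exact hmin_hi.trans (hφ.le_right_of_left_le'' hsI hx hshi' hhix.le hmin_hi)

section Bank

variable {n : ℕ} {a h : Fin n → ℝ} {r M : ℝ} {fbar : Fin n → (Fin n → ℝ) → ℝ} {g : ℝ → ℝ}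
  {s : Fin n → ℝ} {i : Fin n} {x : ℝ}

lemma memD_update (hs : memD n a s) (hx : x ∈ Icc 0 (a i)) : memD n a (update s i x) :=
  (forall_update_iff s fun j y => y ∈ Icc 0 (a j)).2 ⟨hx, fun j _ => hs j⟩

lemma sum_mem_Icc_of_memD (hM : ∑ i, a i ≤ M) (hs : memD n a s) : ∑ j, s j ∈ Icc 0 M :=
  ⟨Finset.sum_nonneg fun j _ => (hs j).1, (Finset.sum_le_sum fun j _ => (hs j).2).trans hM⟩

lemma feasP2_iff {q : ℝ} {qb : Fin n → ℝ} (hqb : 0 < qb i) (hq : q < qb i) :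
    feasP2 n a h q qb i x ↔
      x ∈ Icc 0 (a i) ∧ x * qb i ≤ h i ∧ h i ≤ x * qb i + (a i - x) * q := by
  rw [feasP2, le_div_iff₀ hqb, div_le_iff₀ (sub_pos.2 hq)]
  constructor <;> rintro ⟨hx, hcash, htotal⟩ <;> exact ⟨hx, hcash, by linarith⟩

lemma feasP1_self_iff :
    feasP1 n a h fbar g i s (s i) ↔
      s i ∈ Icc 0 (a i) ∧ s i * fbar i s ≤ h i ∧
        h i ≤ s i * fbar i s + (a i - s i) * g (∑ j, s j) := by
  simp only [feasP1, update_eq_self]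

lemma feasP1_self_iff_feasP2 (hA : Assumption1 n a M fbar g) (hs : memD n a s) :
    feasP1 n a h fbar g i s (s i) ↔
      feasP2 n a h (g (∑ j, s j)) (fun j => fbar j s) i (s i) := by
  rw [feasP1_self_iff, feasP2_iff (hA.fbar_mem i s hs).1 (hA.g_lt_fbar i s hs)]

lemma cash_le_mul_of_le (hA : Assumption1 n a M fbar g) (hs : memD n a s)
    (hx : x ∈ Icc 0 (a i)) (hsx : s i ≤ x) :
    x * fbar i (update s i x) ≤ x * fbar i s :=
  mul_le_mul_of_nonneg_left
    (hA.fbar_anti i s _ hs (memD_update hs hx) (le_update_self_iff.2 hsx)) hx.1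

lemma linear_le_total_of_le (hA : Assumption1 n a M fbar g) (hM : ∑ i, a i ≤ M)
    (hs : memD n a s) (hx : x ∈ Icc 0 (a i)) (hxs : x ≤ s i) :
    x * fbar i s + (a i - x) * g (∑ j, s j) ≤
      x * fbar i (update s i x) + (a i - x) * g (∑ j, update s i x j) := by
  have hle : update s i x ≤ s := update_le_self_iff.2 hxs
  have hsx := memD_update hs hx
  have hfbar : fbar i s ≤ fbar i (update s i x) := hA.fbar_anti i _ s hsx hs hle
  have hg : g (∑ j, s j) ≤ g (∑ j, update s i x j) :=
    hA.g_anti.antitoneOn (sum_mem_Icc_of_memD hM hsx) (sum_mem_Icc_of_memD hM hs)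
      (Finset.sum_le_sum fun j _ => hle j)
  exact add_le_add (mul_le_mul_of_nonneg_left hfbar hx.1)
    (mul_le_mul_of_nonneg_left hg (sub_nonneg.2 hx.2))

lemma feasP1_of_feasP2 (hA : Assumption1 n a M fbar g) (hM : ∑ i, a i ≤ M)
    (hs : memD n a s) (hself : feasP1 n a h fbar g i s (s i))
    (hx : feasP2 n a h (g (∑ j, s j)) (fun j => fbar j s) i x) :
    feasP1 n a h fbar g i s x := by
  obtain ⟨hsI, hsC, hsT⟩ := feasP1_self_iff.1 hself
  obtain ⟨hxI, hxC, hxT⟩ :=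
    (feasP2_iff (hA.fbar_mem i s hs).1 (hA.g_lt_fbar i s hs)).1 hx
  refine ⟨hxI, ?_, ?_⟩
  · rcases le_total x (s i) with hxs | hsx
    · have hC := (hA.cash_mono i s hs).monotoneOn hxI hsI hxs
      simp only [update_eq_self] at hC
      linarith
    · linarith [cash_le_mul_of_le hA hs hxI hsx]
  · rcases le_total x (s i) with hxs | hsx
    · linarith [linear_le_total_of_le hA hM hs hxI hxs]
    · have hT := (hA.total_mono i s hs).monotoneOn hsI hxI hsx
      simp only [update_eq_self] at hT
      linarith

lemma convexOn_obj_update (hA : Assumption1 n a M fbar g) (hr : 0 ≤ r) (hs : memD n a s) :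
    ConvexOn ℝ (Icc 0 (a i)) fun x => obj n r h fbar i (update s i x) := by
  have hcash := (hA.cash_concave i s hs).smul (c := 1 + r) (by linarith)
  have hlin : ConvexOn ℝ (Icc 0 (a i)) fun x : ℝ => x + r * h i :=
    (convexOn_id (convex_Icc _ _)).add (convexOn_const _ (convex_Icc _ _))
  refine (hlin.sub hcash).congr fun x _ => ?_
  simp only [obj, update_self, Pi.sub_apply, smul_eq_mul]
  ring

lemma obj_le_of_feasP1_of_isMin_feasP2 (hA : Assumption1 n a M fbar g) (hr : 0 ≤ r)
    (hs : memD n a s) (hself : feasP1 n a h fbar g i s (s i))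
    (hmin : ∀ y, feasP2 n a h (g (∑ j, s j)) (fun j => fbar j s) i y →
      obj n r h fbar i s ≤ obj n r h fbar i (update s i y))
    (hx : feasP1 n a h fbar g i s x) :
    obj n r h fbar i s ≤ obj n r h fbar i (update s i x) := by
  have hp : 0 < fbar i s := (hA.fbar_mem i s hs).1
  have hpq : 0 < fbar i s - g (∑ j, s j) := sub_pos.2 (hA.g_lt_fbar i s hs)
  obtain ⟨hsI, hs_hi, hlo_s⟩ := (feasP1_self_iff_feasP2 hA hs).1 hself
  obtain ⟨hxI, hxC, hxT⟩ := hx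
  have key := (convexOn_obj_update hA hr hs (h := h)).le_of_isMinOn_inter_Icc
    ⟨hsI, hlo_s, hs_hi⟩
    (isMinOn_iff.2 fun y ⟨hyI, hlo_y, hy_hi⟩ => by
      simpa only [update_eq_self] using hmin y ⟨hyI, hy_hi, hlo_y⟩) hxI
  simp only [update_eq_self] at key
  -- If `s i` were an end of the (P2) interval on the side of `x`, strict monotonicity of the
  -- total value (resp. the cash raised) would make `x` infeasible for (P1).
  refine key (fun hxlo => ?_) (fun hhix => ?_) <;> by_contra! hs_end
  · have hT := hA.total_mono i s hs hxI hsI (hxlo.trans_le hlo_s)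
    simp only [update_eq_self] at hT
    rw [le_div_iff₀ hpq] at hs_end
    linarith
  · have hC := hA.cash_mono i s hs hsI hxI (hs_hi.trans_lt hhix)
    simp only [update_eq_self] at hC
    rw [div_le_iff₀ hp] at hs_end
    linarith

lemma exists_feasP1_iff (hA : Assumption1 n a M fbar g) (hM : ∑ i, a i ≤ M)
    (hh : 0 ≤ h i) (hs : memD n a s) :
    (∃ x, feasP1 n a h fbar g i s x) ↔ h i ≤ a i * fbar i (update s i (a i)) := by
  have haI : a i ∈ Icc 0 (a i) := ⟨(hs i).1.trans (hs i).2, le_rfl⟩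
  constructor
  · rintro ⟨x, hxI, -, hxT⟩
    have hT := (hA.total_mono i s hs).monotoneOn hxI haI hxI.2
    simp only [sub_self, zero_mul, add_zero] at hT
    linarith
  · intro hle
    have hcont : ContinuousOn (fun x => x * fbar i (update s i x)) (Icc 0 (a i)) :=
      continuousOn_id.mul ((hA.fbar_cont i).comp
        (continuous_const.update i continuous_id : Continuous (update s i)).continuousOn
        fun y hy => memD_update hs hy)
    obtain ⟨x, hxI, hCx⟩ := intermediate_value_Icc haI.1 hcont ⟨by simpa using hh, hle⟩
    have hg := (hA.g_mem _ (sum_mem_Icc_of_memD hM (memD_update hs hxI))).1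
    have hcollateral := mul_nonneg (sub_nonneg.2 hxI.2) hg.le
    exact ⟨x, hxI, hCx.le, by linarith⟩

lemma nashP2_bank_iff_nashP1_bank (hA : Assumption1 n a M fbar g) (hM : ∑ i, a i ≤ M)
    (hr : 0 ≤ r) (hh : 0 ≤ h i) (hs : memD n a s) :
    ((h i ≤ a i * fbar i s →
        feasP2 n a h (g (∑ j, s j)) (fun j => fbar j s) i (s i) ∧
        ∀ x, feasP2 n a h (g (∑ j, s j)) (fun j => fbar j s) i x →
          obj n r h fbar i s ≤ obj n r h fbar i (update s i x)) ∧
      (a i * fbar i s < h i → s i = a i)) ↔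
    (((∃ x, feasP1 n a h fbar g i s x) →
        feasP1 n a h fbar g i s (s i) ∧
        ∀ x, feasP1 n a h fbar g i s x →
          obj n r h fbar i s ≤ obj n r h fbar i (update s i x)) ∧
      ((¬ ∃ x, feasP1 n a h fbar g i s x) → s i = a i)) := by
  by_cases hself : feasP1 n a h fbar g i s (s i)
  · have hself₂ := (feasP1_self_iff_feasP2 hA hs).1 hself
    have hle : h i ≤ a i * fbar i s := by
      obtain ⟨hsI, -, hsT⟩ := feasP1_self_iff.1 hself
      nlinarith [hA.g_lt_fbar i s hs, hsI.2]
    constructor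
    · rintro ⟨hopt, -⟩
      exact ⟨fun _ => ⟨hself, fun x =>
          obj_le_of_feasP1_of_isMin_feasP2 hA hr hs hself (hopt hle).2⟩,
        fun hnex => (hnex ⟨_, hself⟩).elim⟩
    · rintro ⟨hopt, -⟩
      exact ⟨fun _ => ⟨hself₂, fun x hx =>
          (hopt ⟨_, hself⟩).2 x (feasP1_of_feasP2 hA hM hs hself hx)⟩,
        fun hlt => (hlt.not_ge hle).elim⟩
  · have hself₂ : ¬ feasP2 n a h (g (∑ j, s j)) (fun j => fbar j s) i (s i) :=
      (feasP1_self_iff_feasP2 hA hs).not.1 hself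
    have hnex_iff (hsa : s i = a i) :
        (¬ ∃ x, feasP1 n a h fbar g i s x) ↔ a i * fbar i s < h i := by
      rw [exists_feasP1_iff hA hM hh hs, ← hsa, update_eq_self, not_le]
    constructor
    · rintro ⟨hfeas, hins⟩
      have hlt : a i * fbar i s < h i := lt_of_not_ge fun hle => hself₂ (hfeas hle).1
      have hsa := hins hlt
      exact ⟨fun hex => ((hnex_iff hsa).2 hlt hex).elim, fun _ => hsa⟩
    · rintro ⟨hfeas, hins⟩
      have hnex : ¬ ∃ x, feasP1 n a h fbar g i s x := fun hex => hself (hfeas hex).1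
      have hsa := hins hnex
      exact ⟨fun hle => ((not_le.2 ((hnex_iff hsa).1 hnex)) hle).elim, fun _ => hsa⟩

end Bank

theorem nash_equilibria_P1_P2_equivalent_general
    (n : ℕ) (a h : Fin n → ℝ) (r M : ℝ)
    (fbar : Fin n → (Fin n → ℝ) → ℝ) (g : ℝ → ℝ)
    (hh : ∀ i, 0 < h i) (hr : 0 ≤ r)
    (hM : ∑ i, a i ≤ M)
    (hA : Assumption1 n a M fbar g)
    (s : Fin n → ℝ) (hs : memD n a s) :
    NashP2 n a h r (g (∑ i, s i)) (fun i => fbar i s) fbar s ↔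
      NashP1 n a h r fbar g s :=
  forall_congr' fun i => nashP2_bank_iff_nashP1_bank hA hM hr (hh i).le hs

/-- under Assumption 1, `s** ∈ D` is a Nash equilibrium of (P2) at the
consistent prices `(g(∑ sᵢ**), f̄₁(s**), ..., f̄ₙ(s**))` iff it is a Nash equilibrium
of (P1). -/
theorem nash_equilibria_P1_P2_equivalent
    (n : ℕ) (a h : Fin n → ℝ) (r M : ℝ)
    (fbar : Fin n → (Fin n → ℝ) → ℝ) (g : ℝ → ℝ)
    (ha : ∀ i, 0 < a i) (hh : ∀ i, 0 < h i) (hr : 0 ≤ r)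
    (hM : ∑ i, a i ≤ M)
    (hA : Assumption1 n a M fbar g)
    (s : Fin n → ℝ) (hs : memD n a s) :
    NashP2 n a h r (g (∑ i, s i)) (fun i => fbar i s) fbar s ↔
      NashP1 n a h r fbar g s :=
  nash_equilibria_P1_P2_equivalent_general n a h r M fbar g hh hr hM hA s hs
end
end

section
/- Under the VWAP pricing structure and Assumption 2, for every fixed price vector (q, q̄_1, ..., q̄_n) ∈ Q̂ := {(q,q̄) ∈ (0,1] × (0,1]^n : q < q̄_i for all i}, there exists a unique Nash equilibrium liquidation vector s̄(q, q̄_1,...,q̄_n) ∈ D of problem (P2), i.e., a unique s̄ ∈ D such that s̄_i is an optimal solution of bank i's problem (P2) given s̄_{-i} for every i. -/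
noncomputable section

/-- Volume weighted average price: every bank obtains the average order book price of the
total liquidation. -/
def vwap (n : ℕ) (f : ℝ → ℝ) : Fin n → (Fin n → ℝ) → ℝ := fun _ s =>
  if (∑ j, s j) = 0 then 1 else (∫ σ in (0:ℝ)..(∑ j, s j), f σ) / (∑ j, s j)

/-- Assumption 2 on the order book density `f : [0,M] → (0,1]`. -/
structure Assumption2 (M : ℝ) (f : ℝ → ℝ) : Prop where
  mem : ∀ x ∈ Set.Icc (0 : ℝ) M, f x ∈ Set.Ioc (0 : ℝ) 1
  anti : StrictAntiOn f (Set.Icc 0 M)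
  smooth : ContDiffOn ℝ 2 f (Set.Icc 0 M)
  f_zero : f 0 = 1
  deriv_mono : MonotoneOn (derivWithin f (Set.Icc 0 M)) (Set.Icc 0 M)

/-!
Write `p t` for the VWAP of a total liquidation `t`. Up to a constant, bank `i`'s cost of selling
`x` while the others sell `c` is `x - (1 + r) * x * p (c + x)`, whose derivative in `x` is
`1 - (1 + r) * m x (c + x)` with the marginal revenue `m x t = p t - x / t * (p t - f t)`.
Convexity of `f` makes `(p t - f t) / t` nonincreasing, so the cost is convex in `x` and the
equilibria are exactly the profiles satisfying every bank's first-order conditions on its feasible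
interval.

Existence: for `r = 0` every bank sells its minimum; for `r > 0` bank `i`'s condition is solved by
clamping a common threshold `b T` to its interval, and the total `T` is a fixed point found by the
intermediate value theorem. Uniqueness: `m x t` decreases in the own volume `x` and, at a fixed
share `x / t`, in the total `t`. Comparing two equilibria, the first-order conditions rule out
different totals, and for equal totals they rule out a bank selling more in one profile while
another sells more in the other.
-/

open Set Filter Topology intervalIntegral

lemma ConvexOn.isMinOn_Icc_iff {g : ℝ → ℝ} {g' l u x : ℝ} (hg : ConvexOn ℝ (Icc l u) g)
    (hx : x ∈ Icc l u) (hd : HasDerivAt g g' x) :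
    IsMinOn g (Icc l u) x ↔ (l < x → g' ≤ 0) ∧ (x < u → 0 ≤ g') := by
  have hvar : IsMinOn g (Icc l u) x → ∀ y ∈ Icc l u, 0 ≤ (y - x) * g' := fun hmin y hy => by
    simpa using hmin.localize.hasFDerivWithinAt_nonneg hd.hasDerivWithinAt.hasFDerivWithinAt
      (sub_mem_posTangentConeAt_of_segment_subset ((convex_Icc l u).segment_subset hx hy))
  refine ⟨fun hmin => ⟨fun hlx => ?_, fun hxu => ?_⟩, fun ⟨hl, hu⟩ y hy => ?_⟩
  · have := hvar hmin l ⟨le_rfl, hx.1.trans hx.2⟩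
    nlinarith
  · have := hvar hmin u ⟨hx.1.trans hx.2, le_rfl⟩
    nlinarith
  · show g x ≤ g y
    rcases lt_trichotomy y x with hyx | rfl | hxy
    · have h := hg.slope_le_of_hasDerivAt hy hx hyx hd
      rw [slope_def_field, div_le_iff₀ (sub_pos.2 hyx)] at h
      nlinarith [hl (hy.1.trans_lt hyx)]
    · exact le_rfl
    · have h := hg.le_slope_of_hasDerivAt hx hy hxy hd
      rw [slope_def_field, le_div_iff₀ (sub_pos.2 hxy)] at h
      nlinarith [hu (hxy.trans_le hy.2)]

lemma clamp_spec {l u b : ℝ} :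
    (l < max l (min u b) → max l (min u b) ≤ b) ∧ (max l (min u b) < u → b ≤ max l (min u b)) := by
  grind

lemma exists_pos_div_le_div {ι : Type*} [Fintype ι] {x y : ι → ℝ} (hx : ∀ i, 0 ≤ x i)
    (hy : 0 < ∑ i, y i) : ∃ i, 0 < y i ∧ x i / ∑ j, x j ≤ y i / ∑ j, y j := by
  classical
  set S := Finset.univ.filter fun i => 0 < y i
  have hS : S.Nonempty := by
    by_contra hS
    rw [Finset.not_nonempty_iff_eq_empty, Finset.filter_eq_empty_iff] at hS
    exact hy.not_ge (Finset.sum_nonpos fun i _ => not_lt.1 (hS (Finset.mem_univ i)))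
  have hle : ∑ i ∈ S, x i / ∑ j, x j ≤ ∑ i ∈ S, y i / ∑ j, y j := calc
    ∑ i ∈ S, x i / ∑ j, x j ≤ ∑ i, x i / ∑ j, x j :=
      Finset.sum_le_sum_of_subset_of_nonneg (Finset.subset_univ S) fun i _ _ =>
        div_nonneg (hx i) (Finset.sum_nonneg fun j _ => hx j)
    _ ≤ 1 := by rw [← Finset.sum_div]; exact div_self_le_one _
    _ = ∑ i, y i / ∑ j, y j := by rw [← Finset.sum_div, div_self hy.ne']
    _ ≤ ∑ i ∈ S, y i / ∑ j, y j := by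
      rw [← Finset.sum_filter_add_sum_filter_not Finset.univ (fun i => 0 < y i)]
      exact add_le_of_nonpos_right (Finset.sum_nonpos fun i hi =>
        div_nonpos_of_nonpos_of_nonneg (not_lt.1 (Finset.mem_filter.1 hi).2) hy.le)
  obtain ⟨i, hi, hle⟩ := Finset.exists_le_of_sum_le hS hle
  exact ⟨i, (Finset.mem_filter.1 hi).2, hle⟩

namespace FireSale

section OrderBook

variable {M : ℝ} {f : ℝ → ℝ} {t : ℝ}

/-- `f` frozen outside `[0, M]`, so that the proceeds below are differentiable everywhere. -/
def extDensity (M : ℝ) (f : ℝ → ℝ) (σ : ℝ) : ℝ := f (max 0 (min σ M))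

lemma extDensity_of_mem (ht : t ∈ Icc 0 M) : extDensity M f t = f t := by
  rw [extDensity, min_eq_left ht.2, max_eq_right ht.1]

lemma continuous_extDensity (hf : Assumption2 M f) (hM : 0 ≤ M) :
    Continuous (extDensity M f) :=
  hf.smooth.continuousOn.comp_continuous (by fun_prop)
    fun _ => ⟨le_max_left _ _, max_le hM (min_le_right _ _)⟩

def proceeds (M : ℝ) (f : ℝ → ℝ) (t : ℝ) : ℝ := ∫ σ in (0 : ℝ)..t, extDensity M f σ

lemma hasDerivAt_proceeds (hf : Assumption2 M f) (hM : 0 ≤ M) (t : ℝ) :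
    HasDerivAt (proceeds M f) (extDensity M f t) t :=
  ((continuous_extDensity hf hM).integral_hasStrictDerivAt 0 t).hasDerivAt

lemma proceeds_zero : proceeds M f 0 = 0 := integral_same

lemma proceeds_of_mem (ht : t ∈ Icc 0 M) : proceeds M f t = ∫ σ in (0 : ℝ)..t, f σ :=
  integral_congr fun σ hσ => by
    rw [uIcc_of_le ht.1] at hσ
    exact extDensity_of_mem ⟨hσ.1, hσ.2.trans ht.2⟩

/-- The VWAP of a total liquidation `t`; `dslope` gives it the value `f 0 = 1` at `t = 0`,
which is the convention of `vwap`. -/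
def price (M : ℝ) (f : ℝ → ℝ) : ℝ → ℝ := dslope (proceeds M f) 0

lemma price_zero (hf : Assumption2 M f) (hM : 0 ≤ M) : price M f 0 = 1 := by
  rw [price, dslope_same, (hasDerivAt_proceeds hf hM 0).deriv,
    extDensity_of_mem ⟨le_rfl, hM⟩, hf.f_zero]

lemma price_of_ne (ht : t ≠ 0) : price M f t = proceeds M f t / t := by
  rw [price, dslope_of_ne _ ht, slope_def_field, proceeds_zero, sub_zero, sub_zero]

lemma mul_price (t : ℝ) : t * price M f t = proceeds M f t := by
  simpa [price, proceeds_zero] using sub_smul_dslope (proceeds M f) 0 t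

lemma continuous_price (hf : Assumption2 M f) (hM : 0 ≤ M) : Continuous (price M f) := by
  refine continuous_iff_continuousAt.2 fun t => ?_
  rcases eq_or_ne t 0 with rfl | ht
  · exact continuousAt_dslope_same.2 (hasDerivAt_proceeds hf hM 0).differentiableAt
  · exact (continuousAt_dslope_of_ne ht).2 (hasDerivAt_proceeds hf hM t).continuousAt

lemma hasDerivAt_price (hf : Assumption2 M f) (hM : 0 ≤ M) (ht : t ≠ 0) :
    HasDerivAt (price M f) ((extDensity M f t - price M f t) / t) t := by
  have h := (hasDerivAt_proceeds hf hM t).div (hasDerivAt_id' t) ht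
  have heq : price M f =ᶠ[𝓝 t] fun u => proceeds M f u / u := by
    filter_upwards [eventually_ne_nhds ht] with u hu
    rw [price_of_ne hu]
  rw [price_of_ne ht, show (extDensity M f t - proceeds M f t / t) / t
    = (extDensity M f t * t - proceeds M f t * 1) / t ^ 2 by field_simp]
  exact h.congr_of_eventuallyEq heq

lemma vwap_eq_price (hf : Assumption2 M f) (hM : 0 ≤ M) {n : ℕ} (s : Fin n → ℝ) (i : Fin n)
    (hs : ∑ j, s j ∈ Icc 0 M) : vwap n f i s = price M f (∑ j, s j) := by
  unfold vwap
  split_ifs with h0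
  · rw [h0, price_zero hf hM]
  · rw [price_of_ne h0, proceeds_of_mem hs]

lemma density_lt_price (hf : Assumption2 M f) (ht : t ∈ Ioc 0 M) : f t < price M f t := by
  have hcont : ContinuousOn f (Icc 0 t) := hf.smooth.continuousOn.mono (Icc_subset_Icc le_rfl ht.2)
  rw [price_of_ne ht.1.ne', lt_div_iff₀ ht.1, proceeds_of_mem ⟨ht.1.le, ht.2⟩]
  calc f t * t = ∫ _ in (0 : ℝ)..t, f t := by simp [mul_comm]
    _ < ∫ σ in (0 : ℝ)..t, f σ :=
      integral_lt_integral_of_continuousOn_of_le_of_exists_lt ht.1 continuousOn_const hcont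
        (fun σ hσ => hf.anti.antitoneOn ⟨hσ.1.le, hσ.2.trans ht.2⟩ ⟨ht.1.le, ht.2⟩ hσ.2)
        ⟨0, ⟨le_rfl, ht.1.le⟩, hf.anti ⟨le_rfl, ht.1.le.trans ht.2⟩ ⟨ht.1.le, ht.2⟩ ht.1⟩

def priceGap (M : ℝ) (f : ℝ → ℝ) (t : ℝ) : ℝ := price M f t - f t

lemma priceGap_pos (hf : Assumption2 M f) (ht : t ∈ Ioc 0 M) : 0 < priceGap M f t :=
  sub_pos.2 (density_lt_price hf ht)

lemma strictAntiOn_price (hf : Assumption2 M f) (hM : 0 ≤ M) :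
    StrictAntiOn (price M f) (Icc 0 M) := by
  refine strictAntiOn_of_deriv_neg (convex_Icc 0 M) (continuous_price hf hM).continuousOn
    fun t ht => ?_
  rw [interior_Icc] at ht
  rw [(hasDerivAt_price hf hM ht.1.ne').deriv, extDensity_of_mem (Ioo_subset_Icc_self ht)]
  exact div_neg_of_neg_of_pos (sub_neg.2 (density_lt_price hf (Ioo_subset_Ioc_self ht))) ht.1

lemma hasDerivAt_density (hf : Assumption2 M f) (ht : t ∈ Ioo 0 M) :
    HasDerivAt f (deriv f t) t :=
  ((hf.smooth.differentiableOn (by norm_num)) t (Ioo_subset_Icc_self ht)).differentiableAt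
    (Icc_mem_nhds ht.1 ht.2) |>.hasDerivAt

lemma convexOn_density (hf : Assumption2 M f) : ConvexOn ℝ (Icc 0 M) f := by
  refine MonotoneOn.convexOn_of_deriv (convex_Icc 0 M) hf.smooth.continuousOn
    ((hf.smooth.differentiableOn (by norm_num)).mono interior_subset) ?_
  rw [interior_Icc]
  intro x hx y hy hxy
  rw [← derivWithin_of_mem_nhds (Icc_mem_nhds hx.1 hx.2),
    ← derivWithin_of_mem_nhds (Icc_mem_nhds hy.1 hy.2)]
  exact hf.deriv_mono (Ioo_subset_Icc_self hx) (Ioo_subset_Icc_self hy) hxy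

lemma tangent_le_density (hf : Assumption2 M f) (ht : t ∈ Ioo 0 M) {σ : ℝ} (hσ : σ ∈ Icc 0 t) :
    f t + deriv f t * (σ - t) ≤ f σ := by
  rcases hσ.2.eq_or_lt with rfl | hσt
  · simp
  have h := (convexOn_density hf).slope_le_of_hasDerivAt ⟨hσ.1, hσt.le.trans ht.2.le⟩
    (Ioo_subset_Icc_self ht) hσt (hasDerivAt_density hf ht)
  rw [slope_def_field, div_le_iff₀ (sub_pos.2 hσt)] at h
  linarith

/-- `t * (2 * priceGap t + t * f' t)` is twice the integral over `[0, t]` of the height of `f`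
above its tangent at `t`. -/
lemma two_mul_priceGap_add_nonneg (hf : Assumption2 M f) (ht : t ∈ Ioo 0 M) :
    0 ≤ 2 * priceGap M f t + t * deriv f t := by
  have hint : 0 ≤ ∫ σ in (0 : ℝ)..t, (f σ - (f t + deriv f t * (σ - t))) :=
    integral_nonneg ht.1.le fun σ hσ => sub_nonneg.2 (tangent_le_density hf ht hσ)
  have hval : ∫ σ in (0 : ℝ)..t, (f σ - (f t + deriv f t * (σ - t)))
      = t * priceGap M f t + t ^ 2 / 2 * deriv f t := by
    have hlin : Continuous fun σ => deriv f t * (σ - t) := by fun_prop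
    rw [integral_sub ((hf.smooth.continuousOn.mono (Icc_subset_Icc le_rfl ht.2.le))
        |>.intervalIntegrable_of_Icc ht.1.le)
        (intervalIntegrable_const.add (hlin.intervalIntegrable _ _)),
      integral_add intervalIntegrable_const (hlin.intervalIntegrable _ _), integral_const_mul,
      integral_sub intervalIntegrable_id intervalIntegrable_const, integral_id,
      ← proceeds_of_mem ⟨ht.1.le, ht.2.le⟩, ← mul_price, priceGap]
    simp
    ring
  rw [hval] at hint
  refine (mul_nonneg_iff_of_pos_left ht.1).1 ?_
  linarith

lemma hasDerivAt_priceGap_div (hf : Assumption2 M f) (hM : 0 ≤ M) (ht : t ∈ Ioo 0 M) :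
    HasDerivAt (fun u => priceGap M f u / u)
      (-(2 * priceGap M f t + t * deriv f t) / t ^ 2) t := by
  have h : HasDerivAt (fun u => priceGap M f u / u) _ t :=
    ((hasDerivAt_price hf hM ht.1.ne').sub (hasDerivAt_density hf ht)).div
      (hasDerivAt_id' t) ht.1.ne'
  refine h.congr_deriv ?_
  have := ht.1.ne'
  rw [extDensity_of_mem (Ioo_subset_Icc_self ht), Pi.sub_apply, priceGap]
  field_simp
  ring

lemma antitoneOn_priceGap_div (hf : Assumption2 M f) (hM : 0 ≤ M) :
    AntitoneOn (fun t => priceGap M f t / t) (Ioc 0 M) := by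
  refine antitoneOn_of_deriv_nonpos (convex_Ioc 0 M) ?_ ?_ ?_
  · exact ((continuous_price hf hM).continuousOn.sub
      (hf.smooth.continuousOn.mono Ioc_subset_Icc_self)).div continuousOn_id
      fun x hx => hx.1.ne'
  · rw [interior_Ioc]
    exact fun t ht => (hasDerivAt_priceGap_div hf hM ht).differentiableAt.differentiableWithinAt
  · rw [interior_Ioc]
    intro t ht
    rw [(hasDerivAt_priceGap_div hf hM ht).deriv, neg_div]
    exact neg_nonpos.2 (div_nonneg (two_mul_priceGap_add_nonneg hf ht) (sq_nonneg t))

end OrderBook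

section MarginalRevenue

variable {M : ℝ} {f : ℝ → ℝ} {r x t : ℝ}

/-- The marginal proceeds `d/dx (x * price (c + x))` of a bank selling `x` out of a total
`t = c + x`. -/
def marginalRevenue (M : ℝ) (f : ℝ → ℝ) (x t : ℝ) : ℝ := price M f t - x / t * priceGap M f t

lemma marginalRevenue_zero_right (hf : Assumption2 M f) (hM : 0 ≤ M) :
    marginalRevenue M f x 0 = 1 := by
  rw [marginalRevenue, div_zero, zero_mul, sub_zero, price_zero hf hM]

lemma marginalRevenue_self (ht : t ≠ 0) : marginalRevenue M f t t = f t := by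
  rw [marginalRevenue, div_self ht, one_mul, priceGap, sub_sub_cancel]

lemma marginalRevenue_sub_eq {c : ℝ} (ht : t ≠ 0) :
    marginalRevenue M f (t - c) t = f t + c * (priceGap M f t / t) := by
  rw [marginalRevenue, priceGap]
  field_simp
  ring

lemma hasDerivAt_revenue (hf : Assumption2 M f) (hM : 0 ≤ M) {c : ℝ} (hc : 0 ≤ c) (hx : 0 ≤ x)
    (hcx : c + x ≤ M) :
    HasDerivAt (fun y => y * price M f (c + y)) (marginalRevenue M f x (c + x)) x := by
  rcases (add_nonneg hc hx).eq_or_lt with h0 | hpos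
  · obtain ⟨rfl, rfl⟩ : c = 0 ∧ x = 0 := ⟨by linarith, by linarith⟩
    simp only [zero_add, mul_price]
    rw [marginalRevenue_zero_right hf hM, ← hf.f_zero, ← extDensity_of_mem (f := f) ⟨le_rfl, hM⟩]
    exact hasDerivAt_proceeds hf hM 0
  · have h := (hasDerivAt_id' x).mul
      ((hasDerivAt_price hf hM hpos.ne').comp x ((hasDerivAt_id' x).const_add c))
    refine h.congr_deriv ?_
    rw [extDensity_of_mem ⟨hpos.le, hcx⟩, marginalRevenue, priceGap, Function.comp_apply]
    field_simp
    ring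

lemma antitoneOn_marginalRevenue_sub (hf : Assumption2 M f) (hM : 0 ≤ M) {c : ℝ} (hc : 0 ≤ c) :
    AntitoneOn (fun t => marginalRevenue M f (t - c) t) (Ioc 0 M) := by
  intro t ht u hu htu
  dsimp only
  rw [marginalRevenue_sub_eq ht.1.ne', marginalRevenue_sub_eq hu.1.ne']
  exact add_le_add (hf.anti.antitoneOn (Ioc_subset_Icc_self ht) (Ioc_subset_Icc_self hu) htu)
    (mul_le_mul_of_nonneg_left (antitoneOn_priceGap_div hf hM ht hu htu) hc)

lemma strictAnti_marginalRevenue (hf : Assumption2 M f) (ht : t ∈ Ioc 0 M) :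
    StrictAnti fun x => marginalRevenue M f x t := by
  intro x y hxy
  have := priceGap_pos hf ht
  have : x / t < y / t := div_lt_div_of_pos_right hxy ht.1
  simp only [marginalRevenue]
  nlinarith

/-- At a fixed share `σ = x / t`, the marginal revenue `(1 - σ) * price t + σ * f t` is a convex
combination of two strictly decreasing functions of `t`. -/
lemma marginalRevenue_lt_of_div_le (hf : Assumption2 M f) (hM : 0 ≤ M) {x' t' : ℝ}
    (hx : 0 ≤ x) (hxt : x ≤ t) (htt' : t < t') (ht' : t' ≤ M) (hshare : x / t ≤ x' / t') :
    marginalRevenue M f x' t' < marginalRevenue M f x t := by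
  have ht : 0 ≤ t := hx.trans hxt
  have htM : t ∈ Icc 0 M := ⟨ht, htt'.le.trans ht'⟩
  have ht'M : t' ∈ Icc 0 M := ⟨ht.trans htt'.le, ht'⟩
  set σ := x / t
  have hσ0 : 0 ≤ σ := div_nonneg hx ht
  have hp := strictAntiOn_price hf hM htM ht'M htt'
  have hd := hf.anti htM ht'M htt'
  have hmix : (1 - σ) * price M f t' + σ * f t' < (1 - σ) * price M f t + σ * f t := by
    rcases (div_le_one_of_le₀ hxt ht : σ ≤ 1).lt_or_eq with hσ1 | hσ1
    · nlinarith [mul_lt_mul_of_pos_left hp (sub_pos.2 hσ1), mul_le_mul_of_nonneg_left hd.le hσ0]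
    · rw [show σ = 1 from hσ1]
      linarith
  calc marginalRevenue M f x' t' ≤ price M f t' - σ * priceGap M f t' :=
        sub_le_sub_left (mul_le_mul_of_nonneg_right hshare
          (priceGap_pos hf ⟨ht.trans_lt htt', ht'⟩).le) _
    _ = (1 - σ) * price M f t' + σ * f t' := by rw [priceGap]; ring
    _ < (1 - σ) * price M f t + σ * f t := hmix
    _ = marginalRevenue M f x t := by rw [marginalRevenue, priceGap]; ring

lemma marginalRevenue_le_one (hf : Assumption2 M f) (hM : 0 ≤ M) (hx : 0 ≤ x) (hxt : x ≤ t)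
    (ht : t ≤ M) : marginalRevenue M f x t ≤ 1 := by
  rcases (hx.trans hxt).eq_or_lt with rfl | htpos
  · exact (marginalRevenue_zero_right hf hM).le
  · rw [← marginalRevenue_zero_right hf hM (x := 0)]
    refine (marginalRevenue_lt_of_div_le hf hM le_rfl le_rfl htpos ht ?_).le
    rw [div_zero]
    positivity

/-- The solution `x` of `(1 + r) * marginalRevenue M f x t = 1`. -/
def threshold (M : ℝ) (f : ℝ → ℝ) (r t : ℝ) : ℝ :=
  t * ((1 + r) * price M f t - 1) / ((1 + r) * priceGap M f t)

lemma mul_marginalRevenue_sub_one (hf : Assumption2 M f) (hr : 0 ≤ r) (ht : t ∈ Ioc 0 M) :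
    (1 + r) * marginalRevenue M f x t - 1
      = (1 + r) * priceGap M f t / t * (threshold M f r t - x) := by
  have := priceGap_pos hf ht
  have : 0 < 1 + r := by linarith
  have := ht.1.ne'
  rw [marginalRevenue, threshold]
  field_simp
  ring

lemma one_le_mul_marginalRevenue_iff (hf : Assumption2 M f) (hr : 0 ≤ r) (ht : t ∈ Ioc 0 M) :
    1 ≤ (1 + r) * marginalRevenue M f x t ↔ x ≤ threshold M f r t := by
  have hk : 0 < (1 + r) * priceGap M f t / t :=
    div_pos (mul_pos (by linarith) (priceGap_pos hf ht)) ht.1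
  rw [← sub_nonneg, mul_marginalRevenue_sub_one hf hr ht, mul_nonneg_iff_of_pos_left hk, sub_nonneg]

lemma mul_marginalRevenue_le_one (hf : Assumption2 M f) (hr : 0 ≤ r) (ht : t ∈ Ioc 0 M)
    (hx : threshold M f r t ≤ x) : (1 + r) * marginalRevenue M f x t ≤ 1 := by
  have hk : 0 < (1 + r) * priceGap M f t / t :=
    div_pos (mul_pos (by linarith) (priceGap_pos hf ht)) ht.1
  rw [← sub_nonpos, mul_marginalRevenue_sub_one hf hr ht]
  exact mul_nonpos_of_nonneg_of_nonpos hk.le (sub_nonpos.2 hx)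

lemma continuousOn_threshold (hf : Assumption2 M f) (hM : 0 ≤ M) (hr : 0 ≤ r) :
    ContinuousOn (threshold M f r) (Ioc 0 M) := by
  have hprice := (continuous_price hf hM).continuousOn (s := Ioc 0 M)
  have hgap : ContinuousOn (priceGap M f) (Ioc 0 M) :=
    hprice.sub (hf.smooth.continuousOn.mono Ioc_subset_Icc_self)
  exact (continuousOn_id.mul ((continuousOn_const.mul hprice).sub continuousOn_const)).div
    (continuousOn_const.mul hgap) fun t ht => (mul_pos (by linarith) (priceGap_pos hf ht)).ne'

end MarginalRevenue

section Cost

variable {M : ℝ} {f : ℝ → ℝ} {r c x : ℝ}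

/-- A bank's cost of selling `x` while the others sell `c`, up to the constant `r * h`. -/
def cost (M : ℝ) (f : ℝ → ℝ) (r c x : ℝ) : ℝ := x - (1 + r) * (x * price M f (c + x))

lemma hasDerivAt_cost (hf : Assumption2 M f) (hM : 0 ≤ M) (hc : 0 ≤ c) (hx : 0 ≤ x)
    (hcx : c + x ≤ M) :
    HasDerivAt (cost M f r c) (1 - (1 + r) * marginalRevenue M f x (c + x)) x :=
  (hasDerivAt_id' x).sub ((hasDerivAt_revenue hf hM hc hx hcx).const_mul (1 + r))

lemma convexOn_cost (hf : Assumption2 M f) (hM : 0 ≤ M) (hr : 0 ≤ r) (hc : 0 ≤ c) :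
    ConvexOn ℝ (Icc 0 (M - c)) (cost M f r c) := by
  have hd : ∀ x ∈ Ioo 0 (M - c),
      HasDerivAt (cost M f r c) (1 - (1 + r) * marginalRevenue M f x (c + x)) x :=
    fun x hx => hasDerivAt_cost hf hM hc hx.1.le (by linarith [hx.2])
  refine MonotoneOn.convexOn_of_deriv (convex_Icc _ _)
    (by have := continuous_price hf hM; unfold cost; fun_prop) ?_ ?_ <;> rw [interior_Icc]
  · exact fun x hx => (hd x hx).differentiableAt.differentiableWithinAt
  · intro x hx y hy hxy
    rw [(hd x hx).deriv, (hd y hy).deriv, sub_le_sub_iff_left]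
    have h := antitoneOn_marginalRevenue_sub hf hM hc ⟨add_pos_of_nonneg_of_pos hc hx.1, by
      linarith [hx.2]⟩ ⟨add_pos_of_nonneg_of_pos hc hy.1, by linarith [hy.2]⟩
      (by linarith)
    simp only [add_sub_cancel_left] at h
    exact mul_le_mul_of_nonneg_left h (by linarith)

lemma isMinOn_cost_iff (hf : Assumption2 M f) (hM : 0 ≤ M) (hr : 0 ≤ r) (hc : 0 ≤ c)
    {l u : ℝ} (hl : 0 ≤ l) (hu : c + u ≤ M) (hx : x ∈ Icc l u) :
    IsMinOn (cost M f r c) (Icc l u) x ↔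
      (l < x → 1 ≤ (1 + r) * marginalRevenue M f x (c + x)) ∧
      (x < u → (1 + r) * marginalRevenue M f x (c + x) ≤ 1) := by
  have hconv := (convexOn_cost hf hM hr hc).subset (Icc_subset_Icc hl (by linarith))
    (convex_Icc l u)
  rw [hconv.isMinOn_Icc_iff hx (hasDerivAt_cost hf hM hc (hl.trans hx.1) (by linarith [hx.2])),
    sub_nonpos, sub_nonneg]

end Cost

section Equilibrium

variable {n : ℕ} {M r : ℝ} {f : ℝ → ℝ} {L U s s' : Fin n → ℝ}

def IsKKT (M : ℝ) (f : ℝ → ℝ) (r : ℝ) (L U s : Fin n → ℝ) : Prop :=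
  ∀ i, s i ∈ Icc (L i) (U i) ∧
    (L i < s i → 1 ≤ (1 + r) * marginalRevenue M f (s i) (∑ j, s j)) ∧
    (s i < U i → (1 + r) * marginalRevenue M f (s i) (∑ j, s j) ≤ 1)

lemma isKKT_zero_self (hf : Assumption2 M f) (hM : 0 ≤ M) (hL : ∀ i, 0 ≤ L i)
    (hLU : ∀ i, L i ≤ U i) (hLM : ∑ i, L i ≤ M) : IsKKT M f 0 L U L := fun i =>
  ⟨⟨le_rfl, hLU i⟩, fun h => absurd h (lt_irrefl _), fun _ => by
    simpa using marginalRevenue_le_one hf hM (hL i)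
      (Finset.single_le_sum (fun j _ => hL j) (Finset.mem_univ i)) hLM⟩

lemma exists_one_le_mul_density (hf : Assumption2 M f) (hM : 0 ≤ M) (hr : 0 < r) {u : ℝ}
    (hu : 0 < u) (huM : u ≤ M) : ∃ t ∈ Ioc 0 u, 1 ≤ (1 + r) * f t := by
  have hlim := ((continuous_extDensity hf hM).tendsto 0).const_mul (1 + r)
  rw [extDensity_of_mem ⟨le_rfl, hM⟩, hf.f_zero, mul_one] at hlim
  have hev := (hlim.eventually (lt_mem_nhds (by linarith : (1 : ℝ) < 1 + r))).filter_mono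
    (nhdsWithin_le_nhds (s := Ioi 0))
  obtain ⟨t, ht1, ht2⟩ := (hev.and (Ioo_mem_nhdsGT hu)).exists
  refine ⟨t, ⟨ht2.1, ht2.2.le⟩, ?_⟩
  rw [← extDensity_of_mem (f := f) ⟨ht2.1.le, ht2.2.le.trans huM⟩]
  exact ht1.le

/-- The equilibrium total is a fixed point of `t ↦ ∑ i, clamp_i (threshold t)`, found by the
intermediate value theorem: for small `t` even a lone seller of `t` still wants to sell more. -/
theorem exists_isKKT_of_pos [Nonempty (Fin n)] (hf : Assumption2 M f) (hM : 0 ≤ M)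
    (hr : 0 < r) (hL : ∀ i, 0 ≤ L i) (hLU : ∀ i, L i ≤ U i) (hU : ∀ i, 0 < U i)
    (hUM : ∑ i, U i ≤ M) :
    ∃ s, IsKKT M f r L U s := by
  obtain ⟨i₀⟩ := ‹Nonempty (Fin n)›
  set clamp := fun t i => max (L i) (min (U i) (threshold M f r t))
  have hUsum : ∀ i, U i ≤ ∑ j, U j :=
    fun i => Finset.single_le_sum (fun j _ => (hU j).le) (Finset.mem_univ i)
  obtain ⟨t₀, ht₀, ht₀f⟩ := exists_one_le_mul_density hf hM hr (hU i₀) ((hUsum i₀).trans hUM)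
  have ht₀M : t₀ ∈ Ioc 0 M := ⟨ht₀.1, ht₀.2.trans ((hUsum i₀).trans hUM)⟩
  have hthr : t₀ ≤ threshold M f r t₀ := by
    rwa [← one_le_mul_marginalRevenue_iff hf hr.le ht₀M, marginalRevenue_self ht₀.1.ne']
  have hsub : Icc t₀ (∑ i, U i) ⊆ Ioc 0 M := fun t ht => ⟨ht₀.1.trans_le ht.1, ht.2.trans hUM⟩
  have hcont : ContinuousOn (fun t => ∑ i, clamp t i - t) (Icc t₀ (∑ i, U i)) :=
    (continuousOn_finsetSum _ fun i _ => ContinuousOn.sup continuousOn_const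
      (ContinuousOn.inf continuousOn_const ((continuousOn_threshold hf hM hr.le).mono hsub))).sub
      continuousOn_id
  have hN₀ : 0 ≤ ∑ i, clamp t₀ i - t₀ := sub_nonneg.2 <|
    ((le_min ht₀.2 hthr).trans (le_max_right _ _)).trans
      (Finset.single_le_sum (f := clamp t₀) (fun i _ => (hL i).trans (le_max_left _ _))
        (Finset.mem_univ i₀))
  obtain ⟨T, hT, hfix⟩ := intermediate_value_Icc' (ht₀.2.trans (hUsum i₀)) hcont
    ⟨sub_nonpos.2 (Finset.sum_le_sum fun i _ => max_le (hLU i) (min_le_left _ _)), hN₀⟩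
  have hsum : ∑ i, clamp T i = T := by simpa [sub_eq_zero] using hfix
  refine ⟨clamp T, fun i => ⟨⟨le_max_left _ _, max_le (hLU i) (min_le_left _ _)⟩, ?_⟩⟩
  rw [hsum]
  exact ⟨fun h => (one_le_mul_marginalRevenue_iff hf hr.le (hsub hT)).2 (clamp_spec.1 h),
    fun h => mul_marginalRevenue_le_one hf hr.le (hsub hT) (clamp_spec.2 h)⟩

theorem exists_isKKT (hf : Assumption2 M f) (hM : 0 ≤ M) (hr : 0 ≤ r) (hL : ∀ i, 0 ≤ L i)
    (hLU : ∀ i, L i ≤ U i) (hU : ∀ i, 0 < U i) (hUM : ∑ i, U i ≤ M) :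
    ∃ s, IsKKT M f r L U s := by
  rcases hr.eq_or_lt with rfl | hr
  · exact ⟨L, isKKT_zero_self hf hM hL hLU ((Finset.sum_le_sum fun i _ => hLU i).trans hUM)⟩
  rcases isEmpty_or_nonempty (Fin n) with hn | hn
  · exact ⟨L, isEmptyElim⟩
  · exact exists_isKKT_of_pos hf hM hr hL hLU hU hUM

namespace IsKKT

lemma nonneg (hs : IsKKT M f r L U s) (hL : ∀ i, 0 ≤ L i) (i : Fin n) : 0 ≤ s i :=
  (hL i).trans (hs i).1.1

lemma sum_le (hs : IsKKT M f r L U s) (hUM : ∑ i, U i ≤ M) : ∑ i, s i ≤ M :=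
  (Finset.sum_le_sum fun i _ => (hs i).1.2).trans hUM

lemma le_of_lt_upper (hs : IsKKT M f r L U s) (hf : Assumption2 M f) (hr : 0 ≤ r)
    (hL : ∀ i, 0 ≤ L i) (hUM : ∑ i, U i ≤ M) {i j : Fin n} (hi : s i < U i) (hj : L j < s j) :
    s j ≤ s i := by
  have hT : 0 < ∑ k, s k := ((hL j).trans_lt hj).trans_le
    (Finset.single_le_sum (fun k _ => hs.nonneg hL k) (Finset.mem_univ j))
  have hmr := le_of_mul_le_mul_left (((hs i).2.2 hi).trans ((hs j).2.1 hj)) (by linarith)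
  exact (strictAnti_marginalRevenue hf ⟨hT, hs.sum_le hUM⟩).le_iff_ge.1 hmr

lemma le_of_sum_le (hs : IsKKT M f r L U s) (hs' : IsKKT M f r L U s') (hf : Assumption2 M f)
    (hr : 0 ≤ r) (hL : ∀ i, 0 ≤ L i) (hUM : ∑ i, U i ≤ M) (hT : ∑ i, s i ≤ ∑ i, s' i)
    (i : Fin n) : s i ≤ s' i := by
  by_contra! hj
  obtain ⟨k, hk⟩ : ∃ k, s k < s' k := by
    by_contra! H
    exact not_lt_of_ge hT (Finset.sum_lt_sum (fun k _ => H k) ⟨i, Finset.mem_univ i, hj⟩)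
  have h1 := hs.le_of_lt_upper hf hr hL hUM (hk.trans_le (hs' k).1.2) ((hs' i).1.1.trans_lt hj)
  have h2 := hs'.le_of_lt_upper hf hr hL hUM (hj.trans_le (hs i).1.2) ((hs k).1.1.trans_lt hk)
  linarith

/-- Some bank holds a weakly larger share of the larger total, so its marginal revenue is
strictly smaller there; the two first-order conditions of that bank are then incompatible. -/
lemma not_sum_lt (hs : IsKKT M f r L U s) (hs' : IsKKT M f r L U s') (hf : Assumption2 M f)
    (hM : 0 ≤ M) (hr : 0 ≤ r) (hL : ∀ i, 0 ≤ L i) (hUM : ∑ i, U i ≤ M) :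
    ¬ ∑ i, s i < ∑ i, s' i := by
  intro hT
  set T := ∑ i, s i
  set T' := ∑ i, s' i
  have hT0 : 0 ≤ T := Finset.sum_nonneg fun i _ => hs.nonneg hL i
  obtain ⟨i, hi, hshare⟩ := exists_pos_div_le_div (hs.nonneg hL) (hT0.trans_lt hT)
  have hsiT : s i ≤ T := Finset.single_le_sum (fun k _ => hs.nonneg hL k) (Finset.mem_univ i)
  have hlt : s i < s' i := by
    rcases hT0.eq_or_lt with hT0 | hT0
    · linarith
    · calc s i = s i / T * T := (div_mul_cancel₀ _ hT0.ne').symm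
        _ ≤ s' i / T' * T := mul_le_mul_of_nonneg_right hshare hT0.le
        _ < s' i / T' * T' := mul_lt_mul_of_pos_left hT (div_pos hi (hT0.trans hT))
        _ = s' i := div_mul_cancel₀ _ (hT0.trans hT).ne'
  have h1 := (hs i).2.2 (hlt.trans_le (hs' i).1.2)
  have h2 := (hs' i).2.1 ((hs i).1.1.trans_lt hlt)
  have h3 := marginalRevenue_lt_of_div_le hf hM (hs.nonneg hL i) hsiT hT (hs'.sum_le hUM) hshare
  nlinarith

theorem unique (hs : IsKKT M f r L U s) (hs' : IsKKT M f r L U s') (hf : Assumption2 M f)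
    (hM : 0 ≤ M) (hr : 0 ≤ r) (hL : ∀ i, 0 ≤ L i) (hUM : ∑ i, U i ≤ M) : s = s' := by
  have hT : ∑ i, s i = ∑ i, s' i := le_antisymm (not_lt.1 (hs'.not_sum_lt hs hf hM hr hL hUM))
    (not_lt.1 (hs.not_sum_lt hs' hf hM hr hL hUM))
  funext i
  exact le_antisymm (hs.le_of_sum_le hs' hf hr hL hUM hT.le i)
    (hs'.le_of_sum_le hs hf hr hL hUM hT.ge i)

end IsKKT

end Equilibrium

section Game

variable {n : ℕ} {a h : Fin n → ℝ} {q : ℝ} {qb : Fin n → ℝ} {i : Fin n}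

/-- Bank `i`'s feasible interval in (P2) is `[lowerBound i, upperBound i]`; a bank with
`a i * qb i < h i` must sell everything, encoded as the interval `[a i, a i]`. -/
def lowerBound (a h : Fin n → ℝ) (q : ℝ) (qb : Fin n → ℝ) (i : Fin n) : ℝ :=
  if h i ≤ a i * qb i then max 0 ((h i - a i * q) / (qb i - q)) else a i

def upperBound (a h qb : Fin n → ℝ) (i : Fin n) : ℝ :=
  if h i ≤ a i * qb i then h i / qb i else a i

lemma lowerBound_nonneg (ha : 0 ≤ a i) : 0 ≤ lowerBound a h q qb i := by
  unfold lowerBound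
  split_ifs
  exacts [le_max_left _ _, ha]

lemma upperBound_le (hqb : 0 < qb i) : upperBound a h qb i ≤ a i := by
  unfold upperBound
  split_ifs with hfe
  exacts [(div_le_iff₀ hqb).2 hfe, le_rfl]

lemma upperBound_pos (ha : 0 < a i) (hh : 0 < h i) (hqb : 0 < qb i) :
    0 < upperBound a h qb i := by
  unfold upperBound
  split_ifs
  exacts [div_pos hh hqb, ha]

lemma lowerBound_le_upperBound (hh : 0 < h i) (hq : 0 < q) (hqb : q < qb i) :
    lowerBound a h q qb i ≤ upperBound a h qb i := by
  unfold lowerBound upperBound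
  split_ifs with hfe
  · refine max_le (div_pos hh (hq.trans hqb)).le ?_
    rw [div_le_div_iff₀ (sub_pos.2 hqb) (hq.trans hqb)]
    nlinarith
  · exact le_rfl

lemma feasP2_iff (hfe : h i ≤ a i * qb i) (hqb : 0 < qb i) {x : ℝ} :
    feasP2 n a h q qb i x ↔ x ∈ Icc (lowerBound a h q qb i) (upperBound a h qb i) := by
  have hUa := upperBound_le (a := a) (h := h) hqb
  unfold feasP2 lowerBound
  unfold upperBound at hUa ⊢
  rw [if_pos hfe] at hUa ⊢
  rw [if_pos hfe, mem_Icc, mem_Icc, max_le_iff]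
  exact ⟨fun ⟨⟨h0, _⟩, hU, hL⟩ => ⟨⟨h0, hL⟩, hU⟩,
    fun ⟨⟨h0, hL⟩, hU⟩ => ⟨⟨h0, hU.trans hUa⟩, hU, hL⟩⟩

variable {M r : ℝ} {f : ℝ → ℝ} {s : Fin n → ℝ}

lemma sum_sub_nonneg (hs : memD n a s) (i : Fin n) : 0 ≤ ∑ j, s j - s i := by
  rw [← Finset.sum_erase_eq_sub (Finset.mem_univ i)]
  exact Finset.sum_nonneg fun j _ => (hs j).1

lemma sum_sub_add_le (hs : memD n a s) (i : Fin n) : ∑ j, s j - s i + a i ≤ ∑ j, a j := by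
  rw [← Finset.sum_erase_eq_sub (Finset.mem_univ i),
    ← Finset.sum_erase_add _ _ (Finset.mem_univ i)]
  exact add_le_add (Finset.sum_le_sum fun j _ => (hs j).2) le_rfl

lemma obj_update_eq (hf : Assumption2 M f) (hM : ∑ j, a j ≤ M) (hs : memD n a s) {x : ℝ}
    (hx : x ∈ Icc 0 (a i)) :
    obj n r h (vwap n f) i (Function.update s i x) = cost M f r (∑ j, s j - s i) x + r * h i := by
  have hsum : ∑ j, Function.update s i x j = ∑ j, s j - s i + x := by
    rw [Finset.sum_update_of_mem (Finset.mem_univ i),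
      ← Finset.sum_erase_eq_sub (Finset.mem_univ i), ← Finset.sdiff_singleton_eq_erase, add_comm]
  have hc := sum_sub_nonneg hs i
  have hca := sum_sub_add_le hs i
  have hM0 : 0 ≤ M := by linarith [hx.1.trans hx.2]
  rw [obj, vwap_eq_price hf hM0 _ _ (hsum ▸ ⟨by linarith [hx.1], by linarith [hx.2]⟩), hsum,
    Function.update_self, cost]
  ring

lemma obj_eq (hf : Assumption2 M f) (hM : ∑ j, a j ≤ M) (hs : memD n a s) :
    obj n r h (vwap n f) i s = cost M f r (∑ j, s j - s i) (s i) + r * h i := by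
  rw [← obj_update_eq hf hM hs (hs i), Function.update_eq_self]

theorem nashP2_iff_isKKT (hf : Assumption2 M f) (hr : 0 ≤ r) (hM : ∑ j, a j ≤ M)
    (ha : ∀ i, 0 ≤ a i) (hqb : ∀ i, 0 < qb i) (hs : memD n a s) :
    NashP2 n a h r q qb (vwap n f) s ↔
      IsKKT M f r (lowerBound a h q qb) (upperBound a h qb) s := by
  have hM0 : 0 ≤ M := (Finset.sum_nonneg fun i _ => ha i).trans hM
  refine forall_congr' fun i => ?_
  by_cases hfe : h i ≤ a i * qb i
  · simp only [hfe, true_implies, not_lt.2 hfe, false_implies, and_true, feasP2_iff hfe (hqb i)]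
    refine and_congr_right fun hsi => ?_
    have hcU : ∑ j, s j - s i + upperBound a h qb i ≤ M := by
      linarith [upperBound_le (a := a) (h := h) (hqb i), sum_sub_add_le hs i]
    have hsub : Icc (lowerBound a h q qb i) (upperBound a h qb i) ⊆ Icc 0 (a i) :=
      Icc_subset_Icc (lowerBound_nonneg (ha i)) (upperBound_le (hqb i))
    rw [← sub_add_cancel (∑ j, s j) (s i), ← isMinOn_cost_iff hf hM0 hr (sum_sub_nonneg hs i)
      (lowerBound_nonneg (ha i)) hcU hsi, isMinOn_iff]
    refine forall₂_congr fun x hx => ?_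
    rw [obj_eq hf hM hs, obj_update_eq hf hM hs (hsub hx), add_le_add_iff_right]
  · simp only [lowerBound, upperBound, hfe, if_false, false_implies, true_and,
      not_le.1 hfe, true_implies]
    rw [Icc_self, mem_singleton_iff]
    exact ⟨fun hsi => by simp [hsi], And.left⟩

theorem memD_and_nashP2_iff_isKKT (hf : Assumption2 M f) (hr : 0 ≤ r) (hM : ∑ j, a j ≤ M)
    (ha : ∀ i, 0 ≤ a i) (hqb : ∀ i, 0 < qb i) :
    memD n a s ∧ NashP2 n a h r q qb (vwap n f) s ↔
      IsKKT M f r (lowerBound a h q qb) (upperBound a h qb) s := by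
  refine ⟨fun ⟨hD, hN⟩ => (nashP2_iff_isKKT hf hr hM ha hqb hD).1 hN, fun hK => ?_⟩
  have hD : memD n a s := fun i =>
    ⟨(lowerBound_nonneg (ha i)).trans (hK i).1.1, (hK i).1.2.trans (upperBound_le (hqb i))⟩
  exact ⟨hD, (nashP2_iff_isKKT hf hr hM ha hqb hD).2 hK⟩

end Game

end FireSale

theorem vwap_unique_equilibrium_at_fixed_prices_general
    (n : ℕ) (a h : Fin n → ℝ) (r M : ℝ) (f : ℝ → ℝ)
    (ha : ∀ i, 0 < a i) (hh : ∀ i, 0 < h i) (hr : 0 ≤ r)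
    (hM : ∑ i, a i ≤ M)
    (hf : Assumption2 M f)
    (q : ℝ) (qb : Fin n → ℝ)
    (hq : q ∈ Set.Ioc (0 : ℝ) 1)
    (hlt : ∀ i, q < qb i) :
    ∃! s : Fin n → ℝ, memD n a s ∧ NashP2 n a h r q qb (vwap n f) s := by
  open FireSale in
  have hM0 : 0 ≤ M := (Finset.sum_nonneg fun i _ => (ha i).le).trans hM
  have hqb : ∀ i, 0 < qb i := fun i => hq.1.trans (hlt i)
  have hL : ∀ i, 0 ≤ lowerBound a h q qb i := fun i => lowerBound_nonneg (ha i).le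
  have hUM : ∑ i, upperBound a h qb i ≤ M :=
    (Finset.sum_le_sum fun i _ => upperBound_le (hqb i)).trans hM
  simp_rw [memD_and_nashP2_iff_isKKT hf hr hM (fun i => (ha i).le) hqb]
  obtain ⟨s, hs⟩ := exists_isKKT hf hM0 hr hL
    (fun i => lowerBound_le_upperBound (hh i) hq.1 (hlt i))
    (fun i => upperBound_pos (ha i) (hh i) (hqb i)) hUM
  exact ⟨s, hs, fun s' hs' => hs'.unique hs hf hM0 hr hL hUM⟩

/-- under VWAP pricing and Assumption 2, for every fixed price vector
`(q, q̄) ∈ Q̂` there exists a unique Nash equilibrium liquidation vector in `D`. -/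
theorem vwap_unique_equilibrium_at_fixed_prices
    (n : ℕ) (a h : Fin n → ℝ) (r M : ℝ) (f : ℝ → ℝ)
    (ha : ∀ i, 0 < a i) (hh : ∀ i, 0 < h i) (hr : 0 ≤ r)
    (hM : ∑ i, a i ≤ M)
    (hf : Assumption2 M f)
    (q : ℝ) (qb : Fin n → ℝ)
    (hq : q ∈ Set.Ioc (0 : ℝ) 1) (hqb : ∀ i, qb i ∈ Set.Ioc (0 : ℝ) 1)
    (hlt : ∀ i, q < qb i) :
    ∃! s : Fin n → ℝ, memD n a s ∧ NashP2 n a h r q qb (vwap n f) s :=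
  vwap_unique_equilibrium_at_fixed_prices_general n a h r M f ha hh hr hM hf q qb hq hlt
end
end

section
/- Under the LOB pricing structure with order book density f satisfying Assumption 2, for every bank i: (i) the function f̄_i is non-increasing in every coordinate on D, i.e., if s, ŝ ∈ D with s ≤ ŝ componentwise then f̄_i(s) ≥ f̄_i(ŝ); and (ii) for every fixed s_{-i} ∈ ∏_{j≠i}[0,a_j], the map s_i ∈ [0,a_i] ↦ s_i·f̄_i(s_i, s_{-i}) is strictly increasing and concave. -/
/-!
Write `V(u) = u + ∑_{j ≠ i} min (s_j, u)` for the market volume traded once bank `i` has sold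
`u` units. Then `s_i · f̄_i(s) = ∫₀^{s_i} f (V u) du`, and `u ↦ f (V u)` is positive and
decreasing, so the cash raised is strictly increasing and concave in `s_i` and `f̄_i` is its
secant slope from the origin, which decreases in `s_i`. Raising the other coordinates only
raises `V` pointwise, hence lowers the integrand.
-/

noncomputable section

/-- Limit order book based price: all banks submit orders at the same rate, so when bank `i`
has sold `u` units the total volume sold is `∑ⱼ min(sⱼ, u)`.  The average price obtained by
bank `i` is `(1/sᵢ) ∫₀^{sᵢ} f(∑ⱼ min(sⱼ,u)) du`, which coincides with the order-statistics
formula of the LOB pricing scheme. -/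
def lob (n : ℕ) (f : ℝ → ℝ) : Fin n → (Fin n → ℝ) → ℝ := fun i s =>
  if s i = 0 then 1 else (∫ u in (0:ℝ)..(s i), f (∑ j, min (s j) u)) / s i

open MeasureTheory intervalIntegral Set Finset

section IntervalIntegral

variable {g : ℝ → ℝ} {a b x y : ℝ}

theorem AntitoneOn.intervalIntegrable_of_mem_Icc (hg : AntitoneOn g (Icc a b))
    (hx : x ∈ Icc a b) (hy : y ∈ Icc a b) : IntervalIntegrable g volume x y :=
  (hg.mono (uIcc_subset_Icc hx hy)).intervalIntegrable

theorem AntitoneOn.mul_le_intervalIntegral (hg : AntitoneOn g (Icc a b))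
    (hx : a ≤ x) (hxy : x ≤ y) (hy : y ≤ b) : (y - x) * g y ≤ ∫ u in x..y, g u := by
  have hxb : x ∈ Icc a b := ⟨hx, hxy.trans hy⟩
  have hya : y ∈ Icc a b := ⟨hx.trans hxy, hy⟩
  simpa using integral_mono_on hxy intervalIntegrable_const
    (hg.intervalIntegrable_of_mem_Icc hxb hya)
    fun u hu => hg ⟨hx.trans hu.1, hu.2.trans hy⟩ hya hu.2

theorem AntitoneOn.intervalIntegral_le_mul (hg : AntitoneOn g (Icc a b))
    (hx : a ≤ x) (hxy : x ≤ y) (hy : y ≤ b) : ∫ u in x..y, g u ≤ (y - x) * g x := by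
  have hxb : x ∈ Icc a b := ⟨hx, hxy.trans hy⟩
  have hya : y ∈ Icc a b := ⟨hx.trans hxy, hy⟩
  simpa using integral_mono_on hxy (hg.intervalIntegrable_of_mem_Icc hxb hya)
    intervalIntegrable_const fun u hu => hg hxb ⟨hx.trans hu.1, hu.2.trans hy⟩ hu.1

/-- The slope of `x ↦ ∫ a..x, g` over `[x, y]` is the mean of `g` there, which decreases
as the interval moves to the right. -/
theorem AntitoneOn.concaveOn_intervalIntegral (hg : AntitoneOn g (Icc a b)) :
    ConcaveOn ℝ (Icc a b) (fun x => ∫ u in a..x, g u) := by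
  refine concaveOn_iff_slope_anti_adjacent.2 ⟨convex_Icc a b, fun x y z hx hz hxy hyz => ?_⟩
  have hy : y ∈ Icc a b := ⟨hx.1.trans hxy.le, hyz.le.trans hz.2⟩
  have ha : a ∈ Icc a b := ⟨le_rfl, hx.1.trans hx.2⟩
  simp only [integral_interval_sub_left (hg.intervalIntegrable_of_mem_Icc ha hz)
      (hg.intervalIntegrable_of_mem_Icc ha hy),
    integral_interval_sub_left (hg.intervalIntegrable_of_mem_Icc ha hy)
      (hg.intervalIntegrable_of_mem_Icc ha hx)]
  calc (∫ u in y..z, g u) / (z - y) ≤ g y := by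
        rw [div_le_iff₀ (sub_pos.2 hyz), mul_comm]
        exact hg.intervalIntegral_le_mul hy.1 hyz.le hz.2
    _ ≤ (∫ u in x..y, g u) / (y - x) := by
        rw [le_div_iff₀ (sub_pos.2 hxy), mul_comm]
        exact hg.mul_le_intervalIntegral hx.1 hxy.le hy.2

theorem strictMonoOn_intervalIntegral_of_pos (hg : IntegrableOn g (Icc a b))
    (hpos : ∀ x ∈ Ioo a b, 0 < g x) : StrictMonoOn (fun x => ∫ u in a..x, g u) (Icc a b) := by
  intro x hx y hy hxy
  have hint : ∀ {x y}, x ∈ Icc a b → y ∈ Icc a b → IntervalIntegrable g volume x y :=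
    fun hx hy => (hg.mono_set (uIcc_subset_Icc hx hy)).intervalIntegrable
  have ha : a ∈ Icc a b := ⟨le_rfl, hx.1.trans hx.2⟩
  have := intervalIntegral_pos_of_pos_on (hint hx hy)
    (fun u hu => hpos u ⟨hx.1.trans_lt hu.1, hu.2.trans_le hy.2⟩) hxy
  rw [← integral_interval_sub_left (hint ha hy) (hint ha hx)] at this
  exact sub_pos.1 this

theorem ConcaveOn.div_le_div_of_map_zero {F : ℝ → ℝ} (hF : ConcaveOn ℝ (Icc 0 b) F)
    (h0 : F 0 = 0) (hx : 0 < x) (hxy : x ≤ y) (hy : y ≤ b) : F y / y ≤ F x / x := by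
  have := hF.neg.secant_mono (a := 0) ⟨le_rfl, hx.le.trans (hxy.trans hy)⟩
    ⟨hx.le, hxy.trans hy⟩ ⟨hx.le.trans hxy, hy⟩ hx.ne' (hx.trans_le hxy).ne' hxy
  simpa [h0, neg_div] using this

end IntervalIntegral

section LOB

variable {n : ℕ} (i : Fin n)

/-- The volume `∑ⱼ min (sⱼ, u)` of `lob`, with bank `i`'s own term written as `u`: the two agree
for `u ≤ sᵢ`, and this form does not depend on `sᵢ`. -/
def soldVolume (s : Fin n → ℝ) (u : ℝ) : ℝ := u + ∑ j ∈ univ.erase i, min (s j) u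

variable {i}

theorem soldVolume_mono (s : Fin n → ℝ) : Monotone (soldVolume i s) := fun _ _ huv =>
  add_le_add huv (sum_le_sum fun _ _ => min_le_min le_rfl huv)

theorem soldVolume_mono_left {s t : Fin n → ℝ} (hst : ∀ j, s j ≤ t j) (u : ℝ) :
    soldVolume i s u ≤ soldVolume i t u :=
  add_le_add le_rfl (sum_le_sum fun j _ => min_le_min (hst j) le_rfl)

@[simp]
theorem soldVolume_update (s : Fin n → ℝ) (x : ℝ) :
    soldVolume i (Function.update s i x) = soldVolume i s := by
  funext u
  refine congrArg _ (sum_congr rfl fun j hj => ?_)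
  rw [Function.update_of_ne (ne_of_mem_erase hj)]

theorem soldVolume_mem_Icc {a s : Fin n → ℝ} {M u : ℝ} (hM : ∑ j, a j ≤ M) (hs : memD n a s)
    (hu : u ∈ Icc 0 (a i)) : soldVolume i s u ∈ Icc 0 M := by
  have hrest_nonneg : 0 ≤ ∑ j ∈ univ.erase i, min (s j) u :=
    sum_nonneg fun j _ => le_min (hs j).1 hu.1
  have hrest_le : ∑ j ∈ univ.erase i, min (s j) u ≤ ∑ j ∈ univ.erase i, a j :=
    sum_le_sum fun j _ => (min_le_left _ _).trans (hs j).2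
  have hsplit := sum_erase_add univ a (mem_univ i)
  exact ⟨add_nonneg hu.1 hrest_nonneg, by unfold soldVolume; linarith [hu.2]⟩

theorem sum_min_eq_soldVolume {s : Fin n → ℝ} {u : ℝ} (hu : u ≤ s i) :
    ∑ j, min (s j) u = soldVolume i s u := by
  rw [← sum_erase_add _ _ (mem_univ i), min_eq_right hu, add_comm, soldVolume]

theorem lob_eq_intervalIntegral_div {f : ℝ → ℝ} {s : Fin n → ℝ} (hs : 0 < s i) :
    lob n f i s = (∫ u in 0..s i, f (soldVolume i s u)) / s i := by
  rw [lob, if_neg hs.ne']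
  congr 1
  refine integral_congr fun u hu => ?_
  rw [uIcc_of_le hs.le] at hu
  rw [sum_min_eq_soldVolume hu.2]

theorem mul_lob_update {f : ℝ → ℝ} (s : Fin n → ℝ) {x : ℝ} (hx : 0 ≤ x) :
    x * lob n f i (Function.update s i x) = ∫ u in 0..x, f (soldVolume i s u) := by
  rcases hx.eq_or_lt with rfl | hx
  · simp
  · rw [lob_eq_intervalIntegral_div (by simpa using hx), Function.update_self,
      soldVolume_update, mul_div_cancel₀ _ hx.ne']

variable {a s t : Fin n → ℝ} {M : ℝ} {f : ℝ → ℝ}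

theorem Assumption2.antitoneOn_comp_soldVolume (hf : Assumption2 M f) (hM : ∑ j, a j ≤ M)
    (hs : memD n a s) : AntitoneOn (fun u => f (soldVolume i s u)) (Icc 0 (a i)) :=
  fun _ hu _ hv huv => hf.anti.antitoneOn (soldVolume_mem_Icc hM hs hu)
    (soldVolume_mem_Icc hM hs hv) (soldVolume_mono s huv)

theorem Assumption2.comp_soldVolume_mem_Ioc (hf : Assumption2 M f) (hM : ∑ j, a j ≤ M)
    (hs : memD n a s) {u : ℝ} (hu : u ∈ Icc 0 (a i)) : f (soldVolume i s u) ∈ Set.Ioc 0 1 :=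
  hf.mem _ (soldVolume_mem_Icc hM hs hu)

theorem Assumption2.lob_le_one (hf : Assumption2 M f) (hM : ∑ j, a j ≤ M) (hs : memD n a s) :
    lob n f i s ≤ 1 := by
  rcases (hs i).1.eq_or_lt with hs0 | hs0
  · simp [lob, ← hs0]
  rw [lob_eq_intervalIntegral_div hs0, div_le_one hs0]
  simpa using integral_mono_on hs0.le
    ((hf.antitoneOn_comp_soldVolume hM hs).intervalIntegrable_of_mem_Icc
      ⟨le_rfl, (hs i).1.trans (hs i).2⟩ (hs i)) intervalIntegrable_const
    fun u hu => (hf.comp_soldVolume_mem_Ioc hM hs ⟨hu.1, hu.2.trans (hs i).2⟩).2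

theorem Assumption2.lob_antitone (hf : Assumption2 M f) (hM : ∑ j, a j ≤ M) (hs : memD n a s)
    (ht : memD n a t) (hst : ∀ j, s j ≤ t j) : lob n f i t ≤ lob n f i s := by
  rcases (hs i).1.eq_or_lt with hs0 | hs0
  · simpa [lob, ← hs0] using hf.lob_le_one hM ht
  have ht0 : 0 < t i := hs0.trans_le (hst i)
  have hanti_s := hf.antitoneOn_comp_soldVolume hM hs (i := i)
  have h0 : (0 : ℝ) ∈ Icc 0 (a i) := ⟨le_rfl, (hs i).1.trans (hs i).2⟩
  have hprice : ∫ u in 0..t i, f (soldVolume i t u) ≤ ∫ u in 0..t i, f (soldVolume i s u) :=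
    integral_mono_on ht0.le
      ((hf.antitoneOn_comp_soldVolume hM ht).intervalIntegrable_of_mem_Icc h0 (ht i))
      (hanti_s.intervalIntegrable_of_mem_Icc h0 (ht i))
      fun u hu => hf.anti.antitoneOn (soldVolume_mem_Icc hM hs ⟨hu.1, hu.2.trans (ht i).2⟩)
        (soldVolume_mem_Icc hM ht ⟨hu.1, hu.2.trans (ht i).2⟩) (soldVolume_mono_left hst u)
  rw [lob_eq_intervalIntegral_div ht0, lob_eq_intervalIntegral_div hs0]
  calc (∫ u in 0..t i, f (soldVolume i t u)) / t i
      ≤ (∫ u in 0..t i, f (soldVolume i s u)) / t i := div_le_div_of_nonneg_right hprice ht0.le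
    _ ≤ (∫ u in 0..s i, f (soldVolume i s u)) / s i :=
      hanti_s.concaveOn_intervalIntegral.div_le_div_of_map_zero integral_same hs0 (hst i) (ht i).2

end LOB

theorem lob_price_monotone_and_cash_concave_general
    (n : ℕ) (a : Fin n → ℝ) (M : ℝ) (f : ℝ → ℝ)
    (hM : ∑ i, a i ≤ M)
    (hf : Assumption2 M f) :
    ∀ i : Fin n,
      (∀ s t : Fin n → ℝ, memD n a s → memD n a t → (∀ j, s j ≤ t j) →
        lob n f i t ≤ lob n f i s) ∧
      (∀ s : Fin n → ℝ, memD n a s →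
        StrictMonoOn (fun x => x * lob n f i (Function.update s i x)) (Set.Icc 0 (a i)) ∧
        ConcaveOn ℝ (Set.Icc 0 (a i)) (fun x => x * lob n f i (Function.update s i x))) := by
  intro i
  refine ⟨fun s t hs ht hst => hf.lob_antitone hM hs ht hst, fun s hs => ?_⟩
  have hcash : EqOn (fun x => ∫ u in 0..x, f (soldVolume i s u))
      (fun x => x * lob n f i (Function.update s i x)) (Icc 0 (a i)) :=
    fun _ hx => (mul_lob_update s hx.1).symm
  have hanti := hf.antitoneOn_comp_soldVolume hM hs (i := i)
  refine ⟨StrictMonoOn.congr ?_ hcash, hanti.concaveOn_intervalIntegral.congr hcash⟩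
  exact strictMonoOn_intervalIntegral_of_pos (hanti.integrableOn_isCompact isCompact_Icc)
    fun u hu => (hf.comp_soldVolume_mem_Ioc hM hs (Ioo_subset_Icc_self hu)).1

/-- under LOB pricing with Assumption 2, each `f̄ᵢ` is non-increasing in
every coordinate on `D`, and for fixed `s₋ᵢ` the cash raised `sᵢ ↦ sᵢ·f̄ᵢ(sᵢ, s₋ᵢ)` is
strictly increasing and concave on `[0, aᵢ]`. -/
theorem lob_price_monotone_and_cash_concave
    (n : ℕ) (a : Fin n → ℝ) (M : ℝ) (f : ℝ → ℝ)
    (ha : ∀ i, 0 < a i) (hM : ∑ i, a i ≤ M)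
    (hf : Assumption2 M f) :
    ∀ i : Fin n,
      (∀ s t : Fin n → ℝ, memD n a s → memD n a t → (∀ j, s j ≤ t j) →
        lob n f i t ≤ lob n f i s) ∧
      (∀ s : Fin n → ℝ, memD n a s →
        StrictMonoOn (fun x => x * lob n f i (Function.update s i x)) (Set.Icc 0 (a i)) ∧
        ConcaveOn ℝ (Set.Icc 0 (a i)) (fun x => x * lob n f i (Function.update s i x))) :=
  lob_price_monotone_and_cash_concave_general n a M f hM hf

end
end

section
/- For every n ≥ 1 and every vector c ∈ [0,1)^n, the matrix B(c) := diag(1−c_1,...,1−c_n) + c·1ᵀ is invertible and satisfies 1ᵀ·B(c)^{-1}·c = (Σ_{i=1}^n c_i/(1−c_i)) / (1 + Σ_{i=1}^n c_i/(1−c_i)); in particular 0 ≤ 1ᵀ·B(c)^{-1}·c < 1. -/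
/-!
Write `B(c) = D + c·1ᵀ` with `D = diag(1 − c)`. If `(D + u·vᵀ) x = b` then
`x = D⁻¹ (b − (vᵀx) u)`, and pairing with `v` gives the scalar equation
`(vᵀx) (1 + vᵀD⁻¹u) = vᵀD⁻¹b`. For `b = 0` it forces `vᵀx = 0` and then `x = 0`, so the
matrix is invertible as soon as `1 + vᵀD⁻¹u ≠ 0`; for `b = u = c`, `v = 1` it is the claimed
formula, where `1ᵀD⁻¹c = ∑ cᵢ/(1−cᵢ) ≥ 0` also gives the bounds.
-/

noncomputable section

open Matrix

/-- The matrix `B(c) = diag(1−c₁,...,1−cₙ) + c·1ᵀ`, i.e. `B(c)ᵢⱼ = (1−cᵢ)δᵢⱼ + cᵢ`. -/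
def Bmat (n : ℕ) (c : Fin n → ℝ) : Matrix (Fin n) (Fin n) ℝ :=
  Matrix.of fun i j => (if i = j then 1 - c i else 0) + c i

namespace Matrix

variable {ι : Type*} [Fintype ι] [DecidableEq ι]

theorem diagonal_add_vecMulVec_mulVec {R : Type*} [CommSemiring R] (d u v x : ι → R) :
    (diagonal d + vecMulVec u v) *ᵥ x = d * x + (v ⬝ᵥ x) • u := by
  ext i
  simp [add_mulVec, mulVec_diagonal, vecMulVec_mulVec, mul_comm]

variable {K : Type*} [Field K]

theorem dotProduct_mul_one_add_of_diagonal_add_vecMulVec_mulVec_eq {d u v x b : ι → K}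
    (hd : ∀ i, d i ≠ 0) (hx : (diagonal d + vecMulVec u v) *ᵥ x = b) :
    (v ⬝ᵥ x) * (1 + v ⬝ᵥ (u / d)) = v ⬝ᵥ (b / d) := by
  have hx' : x = b / d - (v ⬝ᵥ x) • (u / d) := by
    ext i
    rw [← hx, diagonal_add_vecMulVec_mulVec]
    simp only [Pi.sub_apply, Pi.div_apply, Pi.add_apply, Pi.mul_apply, Pi.smul_apply, smul_eq_mul]
    field_simp [hd i]
    ring
  have hs : v ⬝ᵥ x = v ⬝ᵥ (b / d) - (v ⬝ᵥ x) * v ⬝ᵥ (u / d) := by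
    conv_lhs => rw [hx']
    rw [dotProduct_sub, dotProduct_smul, smul_eq_mul]
  linear_combination hs

theorem isUnit_diagonal_add_vecMulVec {d u v : ι → K} (hd : ∀ i, d i ≠ 0)
    (h : 1 + v ⬝ᵥ (u / d) ≠ 0) : IsUnit (diagonal d + vecMulVec u v) := by
  have hker : ∀ x, (diagonal d + vecMulVec u v) *ᵥ x = 0 → x = 0 := by
    intro x hx
    have h0 : (0 : ι → K) / d = 0 := funext fun i => zero_div (d i)
    have hs : v ⬝ᵥ x = 0 := by
      simpa [h, h0] using dotProduct_mul_one_add_of_diagonal_add_vecMulVec_mulVec_eq hd hx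
    ext i
    have hxi := congrFun hx i
    rw [diagonal_add_vecMulVec_mulVec, hs] at hxi
    simpa [hd i] using hxi
  rw [← mulVec_injective_iff_isUnit]
  intro x y hxy
  rw [← sub_eq_zero, ← mulVec_sub] at hxy
  exact sub_eq_zero.mp (hker _ hxy)

theorem dotProduct_inv_diagonal_add_vecMulVec_mulVec {d u v : ι → K} (hd : ∀ i, d i ≠ 0)
    (h : 1 + v ⬝ᵥ (u / d) ≠ 0) (b : ι → K) :
    v ⬝ᵥ ((diagonal d + vecMulVec u v)⁻¹ *ᵥ b) = v ⬝ᵥ (b / d) / (1 + v ⬝ᵥ (u / d)) := by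
  have hdet := (isUnit_iff_isUnit_det _).1 (isUnit_diagonal_add_vecMulVec hd h)
  rw [eq_div_iff h]
  refine dotProduct_mul_one_add_of_diagonal_add_vecMulVec_mulVec_eq hd ?_
  rw [mulVec_mulVec, mul_nonsing_inv _ hdet, one_mulVec]

end Matrix

theorem Bmat_eq_diagonal_add_vecMulVec (n : ℕ) (c : Fin n → ℝ) :
    Bmat n c = diagonal (1 - c) + vecMulVec c 1 := by
  ext i j
  simp [Bmat, diagonal_apply]

theorem Bmat_inv_quadratic_form_general
    (n : ℕ) (c : Fin n → ℝ) (hc : ∀ i, c i ∈ Set.Ico (0 : ℝ) 1) :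
    IsUnit (Bmat n c) ∧
    (∑ i, ((Bmat n c)⁻¹ *ᵥ c) i)
      = (∑ i, c i / (1 - c i)) / (1 + ∑ i, c i / (1 - c i)) ∧
    0 ≤ ∑ i, ((Bmat n c)⁻¹ *ᵥ c) i ∧
    (∑ i, ((Bmat n c)⁻¹ *ᵥ c) i) < 1 := by
  have hd : ∀ i, (1 - c) i ≠ 0 := fun i => (sub_pos.2 (hc i).2).ne'
  have hS : 0 ≤ ∑ i, c i / (1 - c i) :=
    Finset.sum_nonneg fun i _ => div_nonneg (hc i).1 (sub_pos.2 (hc i).2).le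
  have hσ : (1 : Fin n → ℝ) ⬝ᵥ (c / (1 - c)) = ∑ i, c i / (1 - c i) := one_dotProduct _
  have h1S : 1 + (1 : Fin n → ℝ) ⬝ᵥ (c / (1 - c)) ≠ 0 := by rw [hσ]; positivity
  have hsum : ∑ i, ((Bmat n c)⁻¹ *ᵥ c) i
      = (∑ i, c i / (1 - c i)) / (1 + ∑ i, c i / (1 - c i)) := by
    rw [← one_dotProduct, Bmat_eq_diagonal_add_vecMulVec,
      dotProduct_inv_diagonal_add_vecMulVec_mulVec hd h1S, hσ]
  refine ⟨?_, hsum, ?_, ?_⟩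
  · rw [Bmat_eq_diagonal_add_vecMulVec]
    exact isUnit_diagonal_add_vecMulVec hd h1S
  · rw [hsum]; positivity
  · rw [hsum, div_lt_one (by positivity)]
    exact lt_one_add _

/-- for `c ∈ [0,1)ⁿ`, `B(c)` is invertible and
`1ᵀ·B(c)⁻¹·c = (∑ cᵢ/(1−cᵢ)) / (1 + ∑ cᵢ/(1−cᵢ)) ∈ [0,1)`. -/
theorem Bmat_inv_quadratic_form
    (n : ℕ) (hn : 1 ≤ n) (c : Fin n → ℝ) (hc : ∀ i, c i ∈ Set.Ico (0 : ℝ) 1) :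
    IsUnit (Bmat n c) ∧
    (∑ i, ((Bmat n c)⁻¹ *ᵥ c) i)
      = (∑ i, c i / (1 - c i)) / (1 + ∑ i, c i / (1 - c i)) ∧
    0 ≤ ∑ i, ((Bmat n c)⁻¹ *ᵥ c) i ∧
    (∑ i, ((Bmat n c)⁻¹ *ᵥ c) i) < 1 :=
  Bmat_inv_quadratic_form_general n c hc
end
end
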